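/- arXiv:1011.5443 — 2 statements merged into one kernel-verified Lean document; each statement's English description precedes it below -/
import Mathlib

section
/- For all positive reals ε' and δ there exists ε = ε(ε', δ) > 0 such that the following holds. Let (V₁, V₂, V₃) be an (ε, p)-regular triple in which the density of each pair (Vᵢ, Vⱼ) is d_{ij}p with d_{ij} ≥ δ. For each i, let Xᵢ ⊆ Vᵢ be an arbitrary subset with |Xᵢ| ≤ ε|Vᵢ|. Then every vertex v ∈ V₁ \ X₁ that is ε-typical in (V₁, V₂, V₃) and satisfies deg(v, Xⱼ) ≤ εp|Vⱼ| for every j ∈ {2, 3} is an ε'-typical vertex of the triple (V₁ \ X₁, V₂ \ X₂, V₃ \ X₃). -/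
open Finset

open scoped Classical

noncomputable section

namespace RandomTriangle

/-- Number of ordered adjacent pairs between `X` and `Y`. -/
def eBtw {V : Type*} (G : SimpleGraph V) (X Y : Finset V) : ℕ :=
  ((X ×ˢ Y).filter fun a => G.Adj a.1 a.2).card

/-- Edge density between `X` and `Y`. -/
def dens {V : Type*} (G : SimpleGraph V) (X Y : Finset V) : ℝ :=
  (eBtw G X Y : ℝ) / ((X.card : ℝ) * (Y.card : ℝ))

/-- Number of neighbours of `v` in `X`. -/
def degIn {V : Type*} (G : SimpleGraph V) (v : V) (X : Finset V) : ℕ :=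
  (X.filter fun w => G.Adj v w).card

/-- Neighbourhood of `v` inside `X`. -/
def nbhdIn {V : Type*} (G : SimpleGraph V) (v : V) (X : Finset V) : Finset V :=
  X.filter fun w => G.Adj v w

/-- Number of common neighbours of `u` and `w` inside `X`. -/
def codegIn {V : Type*} (G : SimpleGraph V) (u w : V) (X : Finset V) : ℕ :=
  (X.filter fun x => G.Adj u x ∧ G.Adj w x).card

/-- `(ε, p)`-regular pair `(X, Y)`. -/
def RegularPair {V : Type*} (G : SimpleGraph V) (ε p : ℝ) (X Y : Finset V) : Prop :=
  ∀ X' ⊆ X, ∀ Y' ⊆ Y, ε * X.card ≤ (X'.card : ℝ) → ε * Y.card ≤ (Y'.card : ℝ) →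
    |dens G X Y - dens G X' Y'| ≤ ε * p

/-- `(ε, p)`-regular triple. -/
def RegularTriple {V : Type*} (G : SimpleGraph V) (ε p : ℝ) (V₁ V₂ V₃ : Finset V) : Prop :=
  RegularPair G ε p V₁ V₂ ∧ RegularPair G ε p V₁ V₃ ∧ RegularPair G ε p V₂ V₃

/-- `v ∈ V₁` is an `ε`-typical vertex of the triple `(V₁, V₂, V₃)`:
its neighbourhoods in `V₂`, `V₃` have the expected size `(1 ± ε)·d₁ᵢp|Vᵢ|`
(note `d₁ᵢ p = dens G V₁ Vᵢ`), and they contain large subsets forming an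
`(ε, p)`-regular pair of density `(1 ± ε)·d₂₃p`. -/
def TypicalVertex {V : Type*} (G : SimpleGraph V) (ε p : ℝ) (V₁ V₂ V₃ : Finset V) (v : V) :
    Prop :=
  ((1 - ε) * (dens G V₁ V₂ * V₂.card) ≤ ((nbhdIn G v V₂).card : ℝ) ∧
    ((nbhdIn G v V₂).card : ℝ) ≤ (1 + ε) * (dens G V₁ V₂ * V₂.card)) ∧
  ((1 - ε) * (dens G V₁ V₃ * V₃.card) ≤ ((nbhdIn G v V₃).card : ℝ) ∧
    ((nbhdIn G v V₃).card : ℝ) ≤ (1 + ε) * (dens G V₁ V₃ * V₃.card)) ∧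
  ∃ N₂' ⊆ nbhdIn G v V₂, ∃ N₃' ⊆ nbhdIn G v V₃,
    (1 - ε) * ((nbhdIn G v V₂).card : ℝ) ≤ (N₂'.card : ℝ) ∧
    (1 - ε) * ((nbhdIn G v V₃).card : ℝ) ≤ (N₃'.card : ℝ) ∧
    RegularPair G ε p N₂' N₃' ∧
    (1 - ε) * dens G V₂ V₃ ≤ dens G N₂' N₃' ∧
    dens G N₂' N₃' ≤ (1 + ε) * dens G V₂ V₃

/-- An `ε`-typical triple: `(ε,p)`-regular and in each part all but at most an
`ε`-fraction of the vertices are `ε`-typical. -/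
def TypicalTriple {V : Type*} (G : SimpleGraph V) (ε p : ℝ) (V₁ V₂ V₃ : Finset V) : Prop :=
  RegularTriple G ε p V₁ V₂ V₃ ∧
  ((V₁.filter fun v => ¬ TypicalVertex G ε p V₁ V₂ V₃ v).card : ℝ) ≤ ε * V₁.card ∧
  ((V₂.filter fun v => ¬ TypicalVertex G ε p V₂ V₁ V₃ v).card : ℝ) ≤ ε * V₂.card ∧
  ((V₃.filter fun v => ¬ TypicalVertex G ε p V₃ V₁ V₂ v).card : ℝ) ≤ ε * V₃.card

/-- A `(δ, ε, p)`-super-regular triple. -/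
def SuperRegularTriple {V : Type*} (G : SimpleGraph V) (δ ε p : ℝ) (V₁ V₂ V₃ : Finset V) :
    Prop :=
  RegularTriple G ε p V₁ V₂ V₃ ∧
  δ * p ≤ dens G V₁ V₂ ∧ δ * p ≤ dens G V₁ V₃ ∧ δ * p ≤ dens G V₂ V₃ ∧
  (∀ v ∈ V₁, TypicalVertex G ε p V₁ V₂ V₃ v) ∧
  (∀ v ∈ V₂, TypicalVertex G ε p V₂ V₁ V₃ v) ∧
  (∀ v ∈ V₃, TypicalVertex G ε p V₃ V₁ V₂ v)

/-- An edge `(u, w)` with `u ∈ V₂`, `w ∈ V₃` is `ε`-good (w.r.t. `V₁`) if its endpoints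
have at least `(1 - ε)·d₁₂d₁₃p²|V₁|` common neighbours in `V₁`
(note `d₁₂d₁₃p² = dens G V₁ V₂ * dens G V₁ V₃`). -/
def GoodEdge {V : Type*} (G : SimpleGraph V) (ε : ℝ) (V₁ V₂ V₃ : Finset V) (u w : V) : Prop :=
  (1 - ε) * (dens G V₁ V₂ * dens G V₁ V₃ * V₁.card) ≤ (codegIn G u w V₁ : ℝ)

/-- An `ε`-typical vertex `v ∈ V₁` is `ε`-good if the pair of its neighbourhoods in
`V₂`, `V₃` spans at most `ε·d₁₂d₁₃d₂₃p³|V₂||V₃|` edges that are not `ε`-good. -/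
def GoodVertex {V : Type*} (G : SimpleGraph V) (ε p : ℝ) (V₁ V₂ V₃ : Finset V) (v : V) :
    Prop :=
  TypicalVertex G ε p V₁ V₂ V₃ v ∧
  ((((nbhdIn G v V₂) ×ˢ (nbhdIn G v V₃)).filter fun uw =>
      G.Adj uw.1 uw.2 ∧ ¬ GoodEdge G ε V₁ V₂ V₃ uw.1 uw.2).card : ℝ) ≤
    ε * (dens G V₁ V₂ * dens G V₁ V₃ * dens G V₂ V₃ * V₂.card * V₃.card)

/-- A `(δ, ε, p)`-strong-super-regular triple. -/
def StrongSuperRegularTriple {V : Type*} (G : SimpleGraph V) (δ ε p : ℝ)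
    (V₁ V₂ V₃ : Finset V) : Prop :=
  SuperRegularTriple G δ ε p V₁ V₂ V₃ ∧
  (∀ v ∈ V₁, GoodVertex G ε p V₁ V₂ V₃ v) ∧
  (∀ v ∈ V₂, GoodVertex G ε p V₂ V₁ V₃ v) ∧
  (∀ v ∈ V₃, GoodVertex G ε p V₃ V₁ V₂ v)

/-- A triangle packing: a collection of pairwise vertex-disjoint triangles of `G`. -/
def IsTrianglePacking {V : Type*} [DecidableEq V] (G : SimpleGraph V)
    (T : Finset (Finset V)) : Prop :=
  (∀ t ∈ T, t.card = 3 ∧ ∀ x ∈ t, ∀ y ∈ t, x ≠ y → G.Adj x y) ∧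
  (∀ s ∈ T, ∀ t ∈ T, s ≠ t → Disjoint s t)

def idx0 {k : ℕ} (t : Fin k) : Fin (3 * k) := ⟨3 * t.1, by have := t.2; omega⟩
def idx1 {k : ℕ} (t : Fin k) : Fin (3 * k) := ⟨3 * t.1 + 1, by have := t.2; omega⟩
def idx2 {k : ℕ} (t : Fin k) : Fin (3 * k) := ⟨3 * t.1 + 2, by have := t.2; omega⟩

/-- The endpoints of every edge between `A` and `B` have at most `4|C|p²` common
neighbours in `C`. -/
def CodegBound {V : Type*} (G : SimpleGraph V) (p : ℝ) (A B C : Finset V) : Prop :=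
  ∀ u ∈ A, ∀ w ∈ B, G.Adj u w → (codegIn G u w C : ℝ) ≤ 4 * C.card * p ^ 2

/-- The probability, in the Erdős–Rényi random graph `G(n, p)`, of the event `A`. -/
def gnpProb (n : ℕ) (p : ℝ) (A : Set (SimpleGraph (Fin n))) : ℝ :=
  ∑ G ∈ Finset.univ.filter (fun G => G ∈ A),
    p ^ ((Finset.univ.filter fun e : Sym2 (Fin n) => e ∈ G.edgeSet).card) *
      (1 - p) ^ (n.choose 2 - (Finset.univ.filter fun e : Sym2 (Fin n) => e ∈ G.edgeSet).card)

/-- A sequence of graph properties holds asymptotically almost surely in `G(n, p n)`. -/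
def AAS (p : ℕ → ℝ) (P : ∀ n : ℕ, SimpleGraph (Fin n) → Prop) : Prop :=
  Filter.Tendsto (fun n => gnpProb n (p n) {G | P n G}) Filter.atTop (nhds 1)

end RandomTriangle

open RandomTriangle

/-!
Deleting the sets `Xᵢ` perturbs every quantity in the definition of typicality by a small
relative amount. Each `Vᵢ` loses at most an `ε`-fraction, so by regularity every density
`d(Vᵢ \ Xᵢ, Vⱼ \ Xⱼ)` is within `εp` of `dᵢⱼp ≥ δp`, i.e. within a factor `1 ± ε'/100` once
`ε ≤ ε'δ/100`; and `v` loses at most `εp|Vⱼ|`, a tiny fraction of its `≈ d₁ⱼp|Vⱼ|` neighbours in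
`Vⱼ`. The new witnesses are `Nⱼ' \ Xⱼ`: they are still large subsets of the regular pair
`(N₂', N₃')`, so they form a regular pair with parameter `2ε ≤ ε'` and density within `εp` of
`d(N₂', N₃') = (1 ± ε)d₂₃p`.
-/

namespace RandomTriangle

/-- `x = (1 ± η) s`, in the form in which the estimates of `TypicalVertex` are written. -/
def RelApprox (η x s : ℝ) : Prop := (1 - η) * s ≤ x ∧ x ≤ (1 + η) * s

theorem relApprox_iff_abs_sub_le {η x s : ℝ} : RelApprox η x s ↔ |x - s| ≤ η * s := by
  rw [RelApprox, abs_sub_le_iff]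
  constructor <;> rintro ⟨h₁, h₂⟩ <;> constructor <;> linarith

theorem RelApprox.mono {η η' x s : ℝ} (hs : 0 ≤ s) (hη : η ≤ η') (h : RelApprox η x s) :
    RelApprox η' x s := by
  rw [relApprox_iff_abs_sub_le] at h ⊢
  exact h.trans (mul_le_mul_of_nonneg_right hη hs)

theorem RelApprox.of_common {η x y s : ℝ} (hs : 0 ≤ s) (hη₀ : 0 ≤ η) (hη₁ : η ≤ 1)
    (hx : RelApprox (η / 3) x s) (hy : RelApprox (η / 3) y s) : RelApprox η x y := by
  have hy' := hy.1
  rw [relApprox_iff_abs_sub_le] at hx hy ⊢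
  calc |x - y| ≤ |x - s| + |s - y| := abs_sub_le x s y
    _ ≤ η * s * (2 / 3) := by rw [abs_sub_comm s]; linarith
    _ ≤ η * ((1 - η / 3) * s) := by nlinarith [mul_nonneg hη₀ hs]
    _ ≤ η * y := mul_le_mul_of_nonneg_left hy' hη₀

section Graph

variable {V : Type*} {G : SimpleGraph V} {η ε p : ℝ} {A B X Y : Finset V} {v : V}

theorem dens_nonneg (X Y : Finset V) : 0 ≤ dens G X Y := by
  unfold dens
  positivity

theorem RegularPair.mono {ε' : ℝ} (hε : ε ≤ ε') (hp : 0 ≤ p)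
    (h : RegularPair G ε p X Y) : RegularPair G ε' p X Y := by
  intro X' hX' Y' hY' hXc hYc
  calc |dens G X Y - dens G X' Y'|
      ≤ ε * p := h X' hX' Y' hY'
        ((mul_le_mul_of_nonneg_right hε X.card.cast_nonneg).trans hXc)
        ((mul_le_mul_of_nonneg_right hε Y.card.cast_nonneg).trans hYc)
    _ ≤ ε' * p := mul_le_mul_of_nonneg_right hε hp

/-- The density of `(A', B')` and that of any pair of large subsets of it are both
`εp`-close to `d(A, B)`. -/
theorem RegularPair.of_large_subsets {A' B' : Finset V}
    (h : RegularPair G ε p A B) (hp : 0 ≤ p) (hη : η ≤ 1) (hεη : 2 * ε ≤ η)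
    (hA' : A' ⊆ A) (hB' : B' ⊆ B)
    (hA : ε * A.card ≤ η * A'.card) (hB : ε * B.card ≤ η * B'.card) :
    RegularPair G η p A' B' := by
  have hA'big : ε * A.card ≤ (A'.card : ℝ) :=
    hA.trans (mul_le_of_le_one_left A'.card.cast_nonneg hη)
  have hB'big : ε * B.card ≤ (B'.card : ℝ) :=
    hB.trans (mul_le_of_le_one_left B'.card.cast_nonneg hη)
  intro X hX Y hY hXc hYc
  have h₁ := h A' hA' B' hB' hA'big hB'big
  have h₂ := h X (hX.trans hA') Y (hY.trans hB') (hA.trans hXc) (hB.trans hYc)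
  calc |dens G A' B' - dens G X Y|
      ≤ |dens G A' B' - dens G A B| + |dens G A B - dens G X Y| := abs_sub_le _ _ _
    _ ≤ ε * p + ε * p := by rw [abs_sub_comm]; exact add_le_add h₁ h₂
    _ ≤ η * p := by nlinarith

theorem TypicalVertex.mono {ε' : ℝ} {V₁ V₂ V₃ : Finset V} (hε : ε ≤ ε')
    (hp : 0 ≤ p) (h : TypicalVertex G ε p V₁ V₂ V₃ v) : TypicalVertex G ε' p V₁ V₂ V₃ v := by
  obtain ⟨h₂, h₃, N₂, hN₂, N₃, hN₃, hc₂, hc₃, hreg, hd⟩ := h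
  have hsub : 1 - ε' ≤ 1 - ε := by linarith
  exact ⟨RelApprox.mono (by positivity [dens_nonneg (G := G) V₁ V₂]) hε h₂,
    RelApprox.mono (by positivity [dens_nonneg (G := G) V₁ V₃]) hε h₃, N₂, hN₂, N₃, hN₃,
    (mul_le_mul_of_nonneg_right hsub (Nat.cast_nonneg _)).trans hc₂,
    (mul_le_mul_of_nonneg_right hsub (Nat.cast_nonneg _)).trans hc₃,
    hreg.mono hε hp, RelApprox.mono (dens_nonneg _ _) hε hd⟩

theorem degIn_le_mul_card_nbhdIn (hη : 0 ≤ η) (hε : ε ≤ 1 / 2)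
    (hεp : ε * p ≤ η / 100 * dens G B A)
    (hN : (1 - ε) * (dens G B A * A.card) ≤ ((nbhdIn G v A).card : ℝ))
    (hdeg : (degIn G v X : ℝ) ≤ ε * p * A.card) :
    (degIn G v X : ℝ) ≤ η / 50 * (nbhdIn G v A).card := by
  have hs : 0 ≤ dens G B A * A.card := by positivity [dens_nonneg (G := G) B A]
  calc (degIn G v X : ℝ) ≤ ε * p * A.card := hdeg
    _ ≤ η / 100 * dens G B A * A.card := mul_le_mul_of_nonneg_right hεp A.card.cast_nonneg
    _ = η / 100 * (dens G B A * A.card) := mul_assoc _ _ _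
    _ ≤ η / 100 * (2 * (nbhdIn G v A).card) :=
        mul_le_mul_of_nonneg_left (by nlinarith) (by positivity)
    _ = η / 50 * (nbhdIn G v A).card := by ring

variable [DecidableEq V]

theorem one_sub_mul_card_le_card_sdiff {U : Finset V} (hX : X ⊆ U)
    (hXc : (X.card : ℝ) ≤ ε * U.card) : (1 - ε) * U.card ≤ ((U \ X).card : ℝ) := by
  rw [card_sdiff_of_subset hX, Nat.cast_sub (card_le_card hX)]
  linarith

theorem RegularPair.abs_dens_sub_dens_sdiff_le {U W XU XW : Finset V}
    (h : RegularPair G ε p U W) (hε : ε ≤ 1 / 2) (hXU : XU ⊆ U) (hXW : XW ⊆ W)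
    (hXUc : (XU.card : ℝ) ≤ ε * U.card) (hXWc : (XW.card : ℝ) ≤ ε * W.card) :
    |dens G U W - dens G (U \ XU) (W \ XW)| ≤ ε * p := by
  refine h _ sdiff_subset _ sdiff_subset ?_ ?_
  · nlinarith [one_sub_mul_card_le_card_sdiff hXU hXUc, U.card.cast_nonneg (α := ℝ)]
  · nlinarith [one_sub_mul_card_le_card_sdiff hXW hXWc, W.card.cast_nonneg (α := ℝ)]

theorem nbhdIn_sdiff (v : V) (A X : Finset V) : nbhdIn G v (A \ X) = nbhdIn G v A \ X := by
  ext
  simp only [nbhdIn, mem_filter, mem_sdiff]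
  tauto

theorem card_sub_degIn_le_card_sdiff {N : Finset V} (X : Finset V)
    (hN : N ⊆ nbhdIn G v A) : (N.card : ℝ) - degIn G v X ≤ ((N \ X).card : ℝ) := by
  have hinter : N ∩ X ⊆ nbhdIn G v X := fun w hw => by
    have hwN := hN (mem_inter.1 hw).1
    simp only [nbhdIn, mem_filter] at hwN ⊢
    exact ⟨(mem_inter.1 hw).2, hwN.2⟩
  have hle : N.card ≤ (N \ X).card + degIn G v X :=
    (card_sdiff_add_card_inter N X).ge.trans (Nat.add_le_add_left (card_le_card hinter) _)
  have := (Nat.cast_le (α := ℝ)).2 hle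
  push_cast at this
  linarith

theorem card_sdiff_ge_of_degIn_le {N : Finset V} (hη₀ : 0 ≤ η) (hη₁ : η ≤ 1)
    (hεη : ε ≤ η / 100) (hNA : N ⊆ nbhdIn G v A)
    (hN : (1 - ε) * ((nbhdIn G v A).card : ℝ) ≤ N.card)
    (hdeg : (degIn G v X : ℝ) ≤ η / 50 * (nbhdIn G v A).card) :
    (1 - η) * ((nbhdIn G v (A \ X)).card : ℝ) ≤ ((N \ X).card : ℝ) ∧
      ε * N.card ≤ η * ((N \ X).card : ℝ) := by
  have hsd := card_sub_degIn_le_card_sdiff X hNA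
  have hAX : ((nbhdIn G v (A \ X)).card : ℝ) ≤ (nbhdIn G v A).card := by
    exact_mod_cast card_le_card (nbhdIn_sdiff v A X ▸ sdiff_subset)
  have hn := ((nbhdIn G v A).card).cast_nonneg (α := ℝ)
  constructor
  · nlinarith [mul_le_mul_of_nonneg_left hAX (by linarith : 0 ≤ 1 - η)]
  · nlinarith [mul_nonneg hη₀ hn, mul_nonneg (mul_nonneg hη₀ hη₀) hn]

theorem relApprox_card_nbhdIn_sdiff (hη₀ : 0 ≤ η) (hη₁ : η ≤ 1) (hε₀ : 0 ≤ ε)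
    (hεη : ε ≤ η / 100) (hreg : RegularPair G ε p B A) (hεp : ε * p ≤ η / 100 * dens G B A)
    (hY : Y ⊆ B) (hX : X ⊆ A) (hYc : (Y.card : ℝ) ≤ ε * B.card)
    (hXc : (X.card : ℝ) ≤ ε * A.card)
    (hN : RelApprox ε ((nbhdIn G v A).card) (dens G B A * A.card))
    (hdeg : (degIn G v X : ℝ) ≤ η / 50 * (nbhdIn G v A).card) :
    RelApprox η ((nbhdIn G v (A \ X)).card) (dens G (B \ Y) (A \ X) * (A \ X).card) := by
  set D := dens G B A
  set n := ((nbhdIn G v A).card : ℝ)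
  have hD : 0 ≤ D := dens_nonneg B A
  have ha := A.card.cast_nonneg (α := ℝ)
  have hs : 0 ≤ D * A.card := mul_nonneg hD ha
  have hdens := abs_le.1 (hreg.abs_dens_sub_dens_sdiff_le (by linarith) hY hX hYc hXc)
  have hAX := one_sub_mul_card_le_card_sdiff hX hXc
  have hAX' : ((A \ X).card : ℝ) ≤ A.card := Nat.cast_le.2 (card_le_card sdiff_subset)
  refine RelApprox.of_common hs hη₀ hη₁ ⟨?_, ?_⟩ ⟨?_, ?_⟩
  · have hlow : (1 - η / 50) * n ≤ ((nbhdIn G v (A \ X)).card : ℝ) := by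
      rw [nbhdIn_sdiff]
      linarith [card_sub_degIn_le_card_sdiff X (subset_refl (nbhdIn G v A))]
    calc (1 - η / 3) * (D * A.card) ≤ (1 - η / 50) * ((1 - ε) * (D * A.card)) := by
          nlinarith [mul_nonneg (mul_nonneg hε₀ hη₀) hs, mul_le_mul_of_nonneg_right hεη hs,
            mul_nonneg hη₀ hs]
      _ ≤ (1 - η / 50) * n := mul_le_mul_of_nonneg_left hN.1 (by linarith)
      _ ≤ _ := hlow
  · calc ((nbhdIn G v (A \ X)).card : ℝ) ≤ n :=
          Nat.cast_le.2 (card_le_card (nbhdIn_sdiff (G := G) v A X ▸ sdiff_subset))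
      _ ≤ (1 + ε) * (D * A.card) := hN.2
      _ ≤ (1 + η / 3) * (D * A.card) := by gcongr; linarith
  · calc (1 - η / 3) * (D * A.card) ≤ ((1 - η / 100) * D) * ((1 - ε) * A.card) := by
          nlinarith [mul_nonneg (mul_nonneg hη₀ hη₀) hs, mul_nonneg hη₀ hs]
      _ ≤ dens G (B \ Y) (A \ X) * (A \ X).card :=
          mul_le_mul (by linarith) hAX (by nlinarith) (dens_nonneg _ _)
  · calc dens G (B \ Y) (A \ X) * (A \ X).card ≤ ((1 + η / 100) * D) * A.card :=
          mul_le_mul (by linarith) hAX' (Nat.cast_nonneg _) (by nlinarith)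
      _ ≤ (1 + η / 3) * (D * A.card) := by nlinarith

theorem relApprox_dens_of_regular_subpairs {A₂ A₃ N₂ N₃ M₂ M₃ X₂ X₃ : Finset V}
    (hη₀ : 0 ≤ η) (hη₁ : η ≤ 1) (hεη : ε ≤ η / 100)
    (hreg : RegularPair G ε p A₂ A₃) (hεp : ε * p ≤ η / 100 * dens G A₂ A₃)
    (hX₂ : X₂ ⊆ A₂) (hX₃ : X₃ ⊆ A₃)
    (hX₂c : (X₂.card : ℝ) ≤ ε * A₂.card) (hX₃c : (X₃.card : ℝ) ≤ ε * A₃.card)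
    (hNreg : RegularPair G ε p N₂ N₃) (hNd : RelApprox ε (dens G N₂ N₃) (dens G A₂ A₃))
    (hM₂ : M₂ ⊆ N₂) (hM₃ : M₃ ⊆ N₃)
    (hM₂c : ε * N₂.card ≤ (M₂.card : ℝ)) (hM₃c : ε * N₃.card ≤ (M₃.card : ℝ)) :
    RelApprox η (dens G M₂ M₃) (dens G (A₂ \ X₂) (A₃ \ X₃)) := by
  have hD := dens_nonneg (G := G) A₂ A₃
  have hεD : ε * dens G A₂ A₃ ≤ η / 100 * dens G A₂ A₃ := mul_le_mul_of_nonneg_right hεη hD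
  refine RelApprox.of_common hD hη₀ hη₁ ?_ ?_ <;> rw [relApprox_iff_abs_sub_le]
  · rw [relApprox_iff_abs_sub_le] at hNd
    calc |dens G M₂ M₃ - dens G A₂ A₃|
        ≤ |dens G M₂ M₃ - dens G N₂ N₃| + |dens G N₂ N₃ - dens G A₂ A₃| := abs_sub_le _ _ _
      _ ≤ ε * p + ε * dens G A₂ A₃ := by
          rw [abs_sub_comm]; exact add_le_add (hNreg M₂ hM₂ M₃ hM₃ hM₂c hM₃c) hNd
      _ ≤ η / 3 * dens G A₂ A₃ := by nlinarith
  · rw [abs_sub_comm]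
    calc |dens G A₂ A₃ - dens G (A₂ \ X₂) (A₃ \ X₃)| ≤ ε * p :=
          hreg.abs_dens_sub_dens_sdiff_le (by linarith) hX₂ hX₃ hX₂c hX₃c
      _ ≤ η / 3 * dens G A₂ A₃ := by nlinarith

theorem TypicalVertex.sdiff {V₁ V₂ V₃ X₁ X₂ X₃ : Finset V} (hp : 0 ≤ p) (hη₀ : 0 ≤ η)
    (hη₁ : η ≤ 1) (hε₀ : 0 ≤ ε) (hεη : ε ≤ η / 100) (hreg : RegularTriple G ε p V₁ V₂ V₃)
    (hε₁₂ : ε * p ≤ η / 100 * dens G V₁ V₂) (hε₁₃ : ε * p ≤ η / 100 * dens G V₁ V₃)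
    (hε₂₃ : ε * p ≤ η / 100 * dens G V₂ V₃)
    (hX₁ : X₁ ⊆ V₁) (hX₂ : X₂ ⊆ V₂) (hX₃ : X₃ ⊆ V₃) (hX₁c : (X₁.card : ℝ) ≤ ε * V₁.card)
    (hX₂c : (X₂.card : ℝ) ≤ ε * V₂.card) (hX₃c : (X₃.card : ℝ) ≤ ε * V₃.card)
    (hv : TypicalVertex G ε p V₁ V₂ V₃ v)
    (hdeg₂ : (degIn G v X₂ : ℝ) ≤ ε * p * V₂.card)
    (hdeg₃ : (degIn G v X₃ : ℝ) ≤ ε * p * V₃.card) :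
    TypicalVertex G η p (V₁ \ X₁) (V₂ \ X₂) (V₃ \ X₃) v := by
  obtain ⟨hr₁₂, hr₁₃, hr₂₃⟩ := hreg
  obtain ⟨h₂, h₃, N₂, hN₂, N₃, hN₃, hc₂, hc₃, hNreg, hNd⟩ := hv
  have hd₂ := degIn_le_mul_card_nbhdIn hη₀ (by linarith) hε₁₂ h₂.1 hdeg₂
  have hd₃ := degIn_le_mul_card_nbhdIn hη₀ (by linarith) hε₁₃ h₃.1 hdeg₃
  obtain ⟨hM₂, hM₂c⟩ := card_sdiff_ge_of_degIn_le hη₀ hη₁ hεη hN₂ hc₂ hd₂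
  obtain ⟨hM₃, hM₃c⟩ := card_sdiff_ge_of_degIn_le hη₀ hη₁ hεη hN₃ hc₃ hd₃
  refine ⟨relApprox_card_nbhdIn_sdiff hη₀ hη₁ hε₀ hεη hr₁₂ hε₁₂ hX₁ hX₂ hX₁c hX₂c h₂ hd₂,
    relApprox_card_nbhdIn_sdiff hη₀ hη₁ hε₀ hεη hr₁₃ hε₁₃ hX₁ hX₃ hX₁c hX₃c h₃ hd₃,
    N₂ \ X₂, nbhdIn_sdiff (G := G) v V₂ X₂ ▸ sdiff_subset_sdiff hN₂ subset_rfl,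
    N₃ \ X₃, nbhdIn_sdiff (G := G) v V₃ X₃ ▸ sdiff_subset_sdiff hN₃ subset_rfl, hM₂, hM₃,
    hNreg.of_large_subsets hp hη₁ (by linarith) sdiff_subset sdiff_subset hM₂c hM₃c,
    relApprox_dens_of_regular_subpairs hη₀ hη₁ hεη hr₂₃ hε₂₃ hX₂ hX₃ hX₂c hX₃c hNreg hNd
      sdiff_subset sdiff_subset (hM₂c.trans (mul_le_of_le_one_left (Nat.cast_nonneg _) hη₁))
      (hM₃c.trans (mul_le_of_le_one_left (Nat.cast_nonneg _) hη₁))⟩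

end Graph

end RandomTriangle

/-- **Proposition (stability of typicality).** Removing small sets `Xᵢ ⊆ Vᵢ` from a regular
triple keeps an `ε`-typical vertex with few neighbours in the removed sets `ε'`-typical. -/
theorem stmt_5 (ε' δ : ℝ) (hε' : 0 < ε') (hδ : 0 < δ) :
    ∃ ε : ℝ, 0 < ε ∧
      ∀ (V : Type) [Fintype V] [DecidableEq V] (G : SimpleGraph V) (p : ℝ)
        (V₁ V₂ V₃ : Finset V) (d₁₂ d₁₃ d₂₃ : ℝ), 0 < p →
        Disjoint V₁ V₂ → Disjoint V₁ V₃ → Disjoint V₂ V₃ →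
        RegularTriple G ε p V₁ V₂ V₃ →
        dens G V₁ V₂ = d₁₂ * p → dens G V₁ V₃ = d₁₃ * p → dens G V₂ V₃ = d₂₃ * p →
        δ ≤ d₁₂ → δ ≤ d₁₃ → δ ≤ d₂₃ →
        ∀ X₁ ⊆ V₁, ∀ X₂ ⊆ V₂, ∀ X₃ ⊆ V₃,
          (X₁.card : ℝ) ≤ ε * V₁.card → (X₂.card : ℝ) ≤ ε * V₂.card →
          (X₃.card : ℝ) ≤ ε * V₃.card →
          ∀ v ∈ V₁ \ X₁, TypicalVertex G ε p V₁ V₂ V₃ v →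
            (degIn G v X₂ : ℝ) ≤ ε * p * V₂.card →
            (degIn G v X₃ : ℝ) ≤ ε * p * V₃.card →
            TypicalVertex G ε' p (V₁ \ X₁) (V₂ \ X₂) (V₃ \ X₃) v := by
  set η := min ε' 1
  set δ₀ := min δ 1
  have hη : 0 < η := lt_min hε' one_pos
  have hδ₀ : 0 < δ₀ := lt_min hδ one_pos
  refine ⟨η * δ₀ / 100, by positivity, ?_⟩
  intro V _ _ G p V₁ V₂ V₃ d₁₂ d₁₃ d₂₃ hp _ _ _ hreg h₁₂ h₁₃ h₂₃ hd₁₂ hd₁₃ hd₂₃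
    X₁ hX₁ X₂ hX₂ X₃ hX₃ hX₁c hX₂c hX₃c v _ hv hdeg₂ hdeg₃
  have hεη : η * δ₀ / 100 ≤ η / 100 := by
    have := mul_le_of_le_one_right hη.le (min_le_right δ 1)
    linarith
  have hεp : ∀ {D d : ℝ}, δ ≤ d → D = d * p → η * δ₀ / 100 * p ≤ η / 100 * D := by
    rintro D d hd rfl
    have : δ₀ ≤ d := (min_le_left δ 1).trans hd
    calc η * δ₀ / 100 * p = η / 100 * (δ₀ * p) := by ring
      _ ≤ η / 100 * (d * p) := by gcongr
  exact (hv.sdiff hp.le hη.le (min_le_right ε' 1) (by positivity) hεη hreg (hεp hd₁₂ h₁₂)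
    (hεp hd₁₃ h₁₃) (hεp hd₂₃ h₂₃) hX₁ hX₂ hX₃ hX₁c hX₂c hX₃c hdeg₂ hdeg₃).mono
    (min_le_left ε' 1) hp.le
end
end

section
/- For every ξ ∈ (0, 1) there exists a constant C(ξ) such that if p ≥ C(log n / n)^{1/2}, then asymptotically almost surely the following holds in G(n,p) for every integer x with 1 ≤ x ≤ ξn/2: G(n,p) contains no set W of x vertices together with a set E of x pairwise vertex-disjoint edges, none of which has an endpoint in W, such that either (a) the endpoints of each edge in E have at least ξnp² common neighbours in W, or (b) each vertex in W is adjacent to both endpoints of at least ξnp² edges in E. -/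
open Finset

open scoped Classical

noncomputable section

open RandomTriangle

/-!
Fix `W` and `E` with `|W| = |E| = x`. In either case (a) or (b) at least `x·ξnp²` pairs
`(w, e) ∈ W × E` have `w` adjacent to both ends of `e`, so at least `2^(xξnp²)` sets `T` of such
pairs have all their `2|T|` edges present, together with `E`. These edges are distinct, so
Markov's inequality bounds the probability by `2^(-xξnp²) ∑_T p^(x+2|T|) ≤ 2^(-xξnp²) (1+p²)^(x²)`,
and `x ≤ ξn/2` turns this into `exp(-(log 2 - 1/2) xξnp²) ≤ n^(-5x)` once `ξnp² ≥ 30 log n`.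
A union bound over the at most `n^(3x)` choices of `(W, E)` and over `x` leaves `1/n`.
For `p² > 1/2` there is no such configuration at all, since `ξnp² > x`.
-/

namespace RandomTriangle

section Gnp

variable {n : ℕ}

lemma sum_eq_sum_powerset_edgeFinset {V β : Type*} [Fintype V] [DecidableEq V]
    [AddCommMonoid β] (f : Finset (Sym2 V) → β) :
    ∑ G : SimpleGraph V, f G.edgeFinset =
      ∑ S ∈ (⊤ : SimpleGraph V).edgeFinset.powerset, f S := by
  refine sum_nbij' (fun G => G.edgeFinset) (fun S => SimpleGraph.fromEdgeSet S)
    (fun G _ => mem_powerset.2 (SimpleGraph.edgeFinset_mono le_top)) (fun _ _ => mem_univ _)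
    (fun G _ => by simp) (fun S hS => ?_) (fun _ _ => rfl)
  ext e
  have := @mem_powerset.1 hS e
  simp only [SimpleGraph.edgeFinset_top, Set.mem_toFinset, Set.mem_compl_iff] at this
  simp [SimpleGraph.edgeSet_fromEdgeSet]
  tauto

lemma sum_Icc_pow_mul_pow {α R : Type*} [DecidableEq α] [CommSemiring R] {F D : Finset α}
    (hFD : F ⊆ D) (a b : R) :
    ∑ S ∈ Icc F D, a ^ #S * b ^ (#D - #S) = a ^ #F * (a + b) ^ (#D - #F) := by
  have hdisj : ∀ S ∈ (D \ F).powerset, Disjoint F S := fun S hS =>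
    disjoint_of_subset_right (mem_powerset.1 hS) disjoint_sdiff
  rw [Icc_eq_image_powerset hFD, sum_image fun S hS T hT h => by
    rw [← union_sdiff_cancel_left (hdisj S hS), h, union_sdiff_cancel_left (hdisj T hT)]]
  have hcard : #(D \ F) = #D - #F := card_sdiff_of_subset hFD
  rw [← hcard, ← sum_pow_mul_eq_add_pow, mul_sum]
  refine sum_congr rfl fun S hS => ?_
  rw [card_union_of_disjoint (hdisj S hS), pow_add, mul_assoc, hcard, Nat.sub_sub]

def gnpWeight (p : ℝ) (G : SimpleGraph (Fin n)) : ℝ :=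
  p ^ #G.edgeFinset * (1 - p) ^ (n.choose 2 - #G.edgeFinset)

lemma gnpProb_eq_sum (p : ℝ) (A : Set (SimpleGraph (Fin n))) :
    gnpProb n p A = ∑ G, if G ∈ A then gnpWeight p G else 0 := by
  rw [gnpProb, sum_filter]
  refine sum_congr rfl fun G _ => ?_
  have : (univ.filter fun e => e ∈ G.edgeSet) = G.edgeFinset := by ext; simp
  rw [this, gnpWeight]

lemma gnpWeight_nonneg {p : ℝ} (hp0 : 0 ≤ p) (hp1 : p ≤ 1) (G : SimpleGraph (Fin n)) :
    0 ≤ gnpWeight p G := by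
  unfold gnpWeight
  have : 0 ≤ 1 - p := by linarith
  positivity

lemma gnpProb_nonneg {p : ℝ} (hp0 : 0 ≤ p) (hp1 : p ≤ 1) (A : Set (SimpleGraph (Fin n))) :
    0 ≤ gnpProb n p A := by
  rw [gnpProb_eq_sum]
  exact sum_nonneg fun G _ => by split_ifs <;> simp [gnpWeight_nonneg hp0 hp1]

lemma gnpProb_supset_edgeFinset (p : ℝ) {F : Finset (Sym2 (Fin n))}
    (hF : F ⊆ (⊤ : SimpleGraph (Fin n)).edgeFinset) :
    gnpProb n p {G | F ⊆ G.edgeFinset} = p ^ #F := by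
  have hD : #(⊤ : SimpleGraph (Fin n)).edgeFinset = n.choose 2 := by
    rw [SimpleGraph.card_edgeFinset_top_eq_card_choose_two, Fintype.card_fin]
  rw [gnpProb_eq_sum]
  refine (sum_congr rfl fun G _ => ?_).trans ((sum_eq_sum_powerset_edgeFinset fun S =>
    if F ⊆ S then p ^ #S * (1 - p) ^ (n.choose 2 - #S) else 0).trans ?_)
  · simp [gnpWeight]
  rw [← sum_filter, ← Icc_eq_filter_powerset, ← hD, sum_Icc_pow_mul_pow hF, add_sub_cancel,
    one_pow, mul_one]

lemma gnpProb_empty (p : ℝ) : gnpProb n p ∅ = 0 := by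
  simp [gnpProb]

lemma gnpProb_univ (p : ℝ) : gnpProb n p Set.univ = 1 := by
  simpa using gnpProb_supset_edgeFinset (n := n) p (empty_subset _)

lemma gnpProb_compl (p : ℝ) (A : Set (SimpleGraph (Fin n))) :
    gnpProb n p Aᶜ = 1 - gnpProb n p A := by
  rw [← gnpProb_univ p, gnpProb_eq_sum, gnpProb_eq_sum, gnpProb_eq_sum, ← sum_sub_distrib]
  refine sum_congr rfl fun G _ => ?_
  by_cases hG : G ∈ A <;> simp [hG]

lemma gnpProb_le_one {p : ℝ} (hp0 : 0 ≤ p) (hp1 : p ≤ 1) (A : Set (SimpleGraph (Fin n))) :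
    gnpProb n p A ≤ 1 := by
  linarith [gnpProb_compl p A, gnpProb_nonneg hp0 hp1 Aᶜ]

/-- Markov's inequality for the number of events `B i` that occur; `m = 1` is the union bound. -/
lemma mul_gnpProb_le_sum {ι : Type*} {p m : ℝ} (hp0 : 0 ≤ p) (hp1 : p ≤ 1)
    {A : Set (SimpleGraph (Fin n))} {I : Finset ι} {B : ι → Set (SimpleGraph (Fin n))}
    (hA : ∀ G ∈ A, m ≤ #{i ∈ I | G ∈ B i}) :
    m * gnpProb n p A ≤ ∑ i ∈ I, gnpProb n p (B i) := by
  simp_rw [gnpProb_eq_sum]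
  rw [mul_sum, sum_comm]
  refine sum_le_sum fun G _ => ?_
  rw [← sum_filter, sum_const, nsmul_eq_mul]
  split_ifs with hG
  · exact mul_le_mul_of_nonneg_right (hA G hG) (gnpWeight_nonneg hp0 hp1 G)
  · simpa using mul_nonneg (Nat.cast_nonneg _) (gnpWeight_nonneg hp0 hp1 G)

end Gnp

section Config

variable {V : Type*}

def IsExpandingConfig (G : SimpleGraph V) (c : ℝ) (W : Finset V) (E : Finset (V × V)) : Prop :=
  (∀ e ∈ E, G.Adj e.1 e.2 ∧ e.1 ∉ W ∧ e.2 ∉ W) ∧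
  (∀ e ∈ E, ∀ f ∈ E, e ≠ f → e.1 ≠ f.1 ∧ e.1 ≠ f.2 ∧ e.2 ≠ f.1 ∧ e.2 ≠ f.2) ∧
  ((∀ e ∈ E, c ≤ (codegIn G e.1 e.2 W : ℝ)) ∨
   (∀ w ∈ W, c ≤ ((E.filter fun e => G.Adj w e.1 ∧ G.Adj w e.2).card : ℝ)))

def codegPairs (G : SimpleGraph V) (W : Finset V) (E : Finset (V × V)) : Finset (V × (V × V)) :=
  (W ×ˢ E).filter fun q => G.Adj q.1 q.2.1 ∧ G.Adj q.1 q.2.2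

lemma card_codegPairs_eq_sum_codegIn (G : SimpleGraph V) (W : Finset V) (E : Finset (V × V)) :
    #(codegPairs G W E) = ∑ e ∈ E, codegIn G e.1 e.2 W := by
  simp only [codegPairs, codegIn, card_filter, sum_product_right, G.adj_comm]

lemma card_codegPairs_eq_sum_card_filter (G : SimpleGraph V) (W : Finset V)
    (E : Finset (V × V)) :
    #(codegPairs G W E) = ∑ w ∈ W, #(E.filter fun e => G.Adj w e.1 ∧ G.Adj w e.2) := by
  simp only [codegPairs, card_filter, sum_product]

lemma IsExpandingConfig.mul_le_card_codegPairs {G : SimpleGraph V} {c : ℝ} {W : Finset V}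
    {E : Finset (V × V)} (hG : IsExpandingConfig G c W E) (hE : #E = #W) :
    #W * c ≤ #(codegPairs G W E) := by
  rcases hG.2.2 with hc | hc
  · rw [card_codegPairs_eq_sum_codegIn, ← hE, ← nsmul_eq_mul, ← sum_const]
    push_cast
    exact sum_le_sum hc
  · rw [card_codegPairs_eq_sum_card_filter, ← nsmul_eq_mul, ← sum_const]
    push_cast
    exact sum_le_sum hc

def configEdges (E : Finset (V × V)) (T : Finset (V × (V × V))) : Finset (Sym2 V) :=
  E.image (fun e => s(e.1, e.2)) ∪ T.image (fun q => s(q.1, q.2.1)) ∪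
    T.image (fun q => s(q.1, q.2.2))

lemma configEdges_subset_edgeFinset [Fintype V] {G : SimpleGraph V} {W : Finset V}
    {E : Finset (V × V)} {T : Finset (V × (V × V))} (hE : ∀ e ∈ E, G.Adj e.1 e.2)
    (hT : T ⊆ codegPairs G W E) :
    configEdges E T ⊆ G.edgeFinset := by
  have hT' : ∀ q ∈ T, G.Adj q.1 q.2.1 ∧ G.Adj q.1 q.2.2 := fun q hq => (mem_filter.1 (hT hq)).2
  simp only [configEdges, union_subset_iff, image_subset_iff, SimpleGraph.mem_edgeFinset,
    SimpleGraph.mem_edgeSet]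
  exact ⟨⟨hE, fun q hq => (hT' q hq).1⟩, fun q hq => (hT' q hq).2⟩

lemma configEdges_subset_edgeFinset_top [Fintype V] [DecidableEq V] {W : Finset V}
    {E : Finset (V × V)} {T : Finset (V × (V × V))}
    (hW : ∀ e ∈ E, e.1 ≠ e.2 ∧ e.1 ∉ W ∧ e.2 ∉ W) (hT : T ⊆ W ×ˢ E) :
    configEdges E T ⊆ (⊤ : SimpleGraph V).edgeFinset := by
  intro z hz
  simp only [configEdges, mem_union, mem_image] at hz
  simp only [SimpleGraph.edgeFinset_top, Set.mem_toFinset, Set.mem_compl_iff,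
    Sym2.mem_diagSet]
  rcases hz with (⟨e, he, rfl⟩ | ⟨q, hq, rfl⟩) | ⟨q, hq, rfl⟩ <;> rw [Sym2.mk_isDiag_iff]
  · exact (hW e he).1
  · obtain ⟨hqW, hqE⟩ := mem_product.1 (hT hq)
    exact fun h => (hW _ hqE).2.1 (h ▸ hqW)
  · obtain ⟨hqW, hqE⟩ := mem_product.1 (hT hq)
    exact fun h => (hW _ hqE).2.2 (h ▸ hqW)

lemma card_configEdges {W : Finset V} {E : Finset (V × V)} {T : Finset (V × (V × V))}
    (hW : ∀ e ∈ E, e.1 ≠ e.2 ∧ e.1 ∉ W ∧ e.2 ∉ W) (hT : T ⊆ W ×ˢ E)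
    (hM : ∀ e ∈ E, ∀ f ∈ E, e ≠ f → e.1 ≠ f.1 ∧ e.1 ≠ f.2 ∧ e.2 ≠ f.1 ∧ e.2 ≠ f.2) :
    #(configEdges E T) = #E + 2 * #T := by
  have hTW : ∀ q ∈ T, q.1 ∈ W ∧ q.2 ∈ E := fun q hq => mem_product.1 (hT hq)
  have hEq : ∀ e ∈ E, ∀ f ∈ E, (e.1 = f.1 ∨ e.1 = f.2 ∨ e.2 = f.1 ∨ e.2 = f.2) → e = f := by
    intro e he f hf h
    by_contra hne
    have := hM e he f hf hne
    tauto
  have hEnds : ∀ q ∈ T, ∀ r ∈ T, ∀ a b, b ∉ W → s(q.1, a) = s(r.1, b) → q.1 = r.1 ∧ a = b := by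
    intro q hq r hr a b hb h
    rcases Sym2.eq_iff.1 h with h | ⟨h, -⟩
    · exact h
    · exact absurd (h ▸ (hTW q hq).1) hb
  have hE_T : ∀ (g : V × (V × V) → V), Disjoint (E.image fun e => s(e.1, e.2))
      (T.image fun q => s(q.1, g q)) := by
    refine fun g => disjoint_left.2 ?_
    intro z hz hz'
    obtain ⟨e, he, rfl⟩ := mem_image.1 hz
    obtain ⟨q, hq, h⟩ := mem_image.1 hz'
    have hq1 : q.1 ∈ s(e.1, e.2) := h ▸ Sym2.mem_mk_left _ _
    rcases Sym2.mem_iff.1 hq1 with h1 | h1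
    · exact (hW e he).2.1 (h1 ▸ (hTW q hq).1)
    · exact (hW e he).2.2 (h1 ▸ (hTW q hq).1)
  have hT_T : Disjoint (T.image fun q => s(q.1, q.2.1)) (T.image fun q => s(q.1, q.2.2)) := by
    refine disjoint_left.2 ?_
    intro z hz hz'
    obtain ⟨q, hq, rfl⟩ := mem_image.1 hz
    obtain ⟨r, hr, h⟩ := mem_image.1 hz'
    obtain ⟨-, h⟩ := hEnds r hr q hq _ _ (hW _ (hTW q hq).2).2.1 h
    have hqr := hEq _ (hTW r hr).2 _ (hTW q hq).2 (by tauto)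
    exact (hW _ (hTW q hq).2).1 (hqr ▸ h).symm
  have hinj₁ : Set.InjOn (fun q : V × (V × V) => s(q.1, q.2.1)) T := by
    intro q hq r hr h
    obtain ⟨h1, h2⟩ := hEnds q hq r hr _ _ (hW _ (hTW r hr).2).2.1 h
    exact Prod.ext h1 (hEq _ (hTW q hq).2 _ (hTW r hr).2 (Or.inl h2))
  have hinj₂ : Set.InjOn (fun q : V × (V × V) => s(q.1, q.2.2)) T := by
    intro q hq r hr h
    obtain ⟨h1, h2⟩ := hEnds q hq r hr _ _ (hW _ (hTW r hr).2).2.2 h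
    exact Prod.ext h1 (hEq _ (hTW q hq).2 _ (hTW r hr).2 (by tauto))
  have hinjE : Set.InjOn (fun e : V × V => s(e.1, e.2)) E := by
    intro e he f hf h
    exact hEq e he f hf (by rcases Sym2.eq_iff.1 h with h | h <;> tauto)
  rw [configEdges, card_union_of_disjoint (disjoint_union_left.2 ⟨hE_T _, hT_T⟩),
    card_union_of_disjoint (hE_T _), card_image_of_injOn hinjE, card_image_of_injOn hinj₁,
    card_image_of_injOn hinj₂]
  ring

lemma IsExpandingConfig.le_card {G : SimpleGraph V} {c : ℝ} {W : Finset V}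
    {E : Finset (V × V)} (hG : IsExpandingConfig G c W E) (hE : #E = #W) (hW : W.Nonempty) :
    c ≤ #W := by
  rcases hG.2.2 with hc | hc
  · obtain ⟨e, he⟩ := card_pos.1 (hE ▸ hW.card_pos)
    exact (hc e he).trans (Nat.cast_le.2 (card_filter_le _ _))
  · obtain ⟨w, hw⟩ := hW
    exact (hc w hw).trans (Nat.cast_le.2 ((card_filter_le _ _).trans hE.le))

end Config

lemma gnpProb_isExpandingConfig_le {n : ℕ} {p c : ℝ} (hp0 : 0 ≤ p) (hp1 : p ≤ 1)
    {W : Finset (Fin n)} {E : Finset (Fin n × Fin n)} (hE : #E = #W) :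
    gnpProb n p {G | IsExpandingConfig G c W E} ≤
      p ^ #W * (1 + p ^ 2) ^ (#W ^ 2) / 2 ^ (#W * c) := by
  rcases Set.eq_empty_or_nonempty {G | IsExpandingConfig G c W E} with h | ⟨G₀, hG₀⟩
  · rw [h, gnpProb_empty p]
    positivity
  have hW : ∀ e ∈ E, e.1 ≠ e.2 ∧ e.1 ∉ W ∧ e.2 ∉ W :=
    fun e he => ⟨(hG₀.1 e he).1.ne, (hG₀.1 e he).2⟩
  rw [le_div_iff₀ (by positivity), mul_comm]
  calc 2 ^ (#W * c) * gnpProb n p {G | IsExpandingConfig G c W E}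
      ≤ ∑ T ∈ (W ×ˢ E).powerset, gnpProb n p {G | configEdges E T ⊆ G.edgeFinset} := by
        refine mul_gnpProb_le_sum hp0 hp1 fun G hG => ?_
        calc (2 : ℝ) ^ (#W * c) ≤ 2 ^ (#(codegPairs G W E) : ℝ) :=
              Real.rpow_le_rpow_of_exponent_le one_le_two (hG.mul_le_card_codegPairs hE)
          _ = #(codegPairs G W E).powerset := by simp
          _ ≤ _ := by
              refine Nat.cast_le.2 (card_le_card fun T hT => ?_)
              have hT' := mem_powerset.1 hT
              simp only [mem_filter, mem_powerset, Set.mem_ofPred_eq]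
              exact ⟨hT'.trans (filter_subset _ _),
                configEdges_subset_edgeFinset (fun e he => (hG.1 e he).1) hT'⟩
    _ = ∑ T ∈ (W ×ˢ E).powerset, p ^ #W * ((p ^ 2) ^ #T * 1 ^ (#(W ×ˢ E) - #T)) := by
        refine sum_congr rfl fun T hT => ?_
        have hT' := mem_powerset.1 hT
        rw [gnpProb_supset_edgeFinset p (configEdges_subset_edgeFinset_top hW hT'),
          card_configEdges hW hT' hG₀.2.1, hE]
        ring
    _ = p ^ #W * (1 + p ^ 2) ^ (#W ^ 2) := by
        rw [← mul_sum, sum_pow_mul_eq_add_pow, card_product, hE, add_comm]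
        ring

lemma pow_mul_one_add_sq_pow_div_le {n x : ℕ} {p c : ℝ} (hn : 1 ≤ n) (hp0 : 0 ≤ p)
    (hp1 : p ≤ 1) (hxc : 2 * x * p ^ 2 ≤ c) (hc : 30 * Real.log n ≤ c) :
    p ^ x * (1 + p ^ 2) ^ (x ^ 2) / 2 ^ (x * c) ≤ ((n : ℝ) ^ (5 * x))⁻¹ := by
  have hn' : (0 : ℝ) < n := by exact_mod_cast hn
  have hlogn : 0 ≤ Real.log n := Real.log_nonneg (by exact_mod_cast hn)
  have hx : (0 : ℝ) ≤ x := x.cast_nonneg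
  have hpow : p ^ x * (1 + p ^ 2) ^ (x ^ 2) ≤ Real.exp (x * c / 2) := by
    calc p ^ x * (1 + p ^ 2) ^ (x ^ 2) ≤ 1 * Real.exp (p ^ 2) ^ (x ^ 2) := by
          gcongr
          · exact pow_le_one₀ hp0 hp1
          · linarith [Real.add_one_le_exp (p ^ 2)]
      _ = Real.exp (x * (x * p ^ 2)) := by
          rw [one_mul, ← Real.exp_nat_mul]
          push_cast
          ring_nf
      _ ≤ Real.exp (x * c / 2) := by
          gcongr
          nlinarith
  have hexp : Real.exp (x * c / 2) * (n : ℝ) ^ (5 * x) ≤ 2 ^ (x * c) := by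
    -- the constant `30` is chosen so that `30 (log 2 - 1/2) > 5`
    have hlog2 := Real.log_two_gt_d9
    rw [Real.rpow_def_of_pos two_pos, ← Real.exp_log hn', ← Real.exp_nat_mul, ← Real.exp_add]
    gcongr
    push_cast
    have hxc0 : 0 ≤ x * c := mul_nonneg hx (by linarith)
    nlinarith [mul_le_mul_of_nonneg_left hc hx, mul_le_mul_of_nonneg_right hlog2.le hxc0]
  rw [div_le_iff₀ (by positivity), ← div_eq_inv_mul, le_div_iff₀ (by positivity)]
  calc p ^ x * (1 + p ^ 2) ^ (x ^ 2) * (n : ℝ) ^ (5 * x)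
      ≤ Real.exp (x * c / 2) * (n : ℝ) ^ (5 * x) := by gcongr
    _ ≤ 2 ^ (x * c) := hexp

def NoSmallExpandingConfig {n : ℕ} (ξ p : ℝ) (G : SimpleGraph (Fin n)) : Prop :=
  ∀ x : ℕ, 1 ≤ x → (x : ℝ) ≤ ξ * n / 2 →
    ¬ ∃ (W : Finset (Fin n)) (E : Finset (Fin n × Fin n)),
      #W = x ∧ #E = x ∧ IsExpandingConfig G (ξ * n * p ^ 2) W E

lemma gnpProb_not_noSmallExpandingConfig_le {ξ p : ℝ} {n : ℕ} (hn : 1 ≤ n) (hp0 : 0 ≤ p)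
    (hp1 : p ≤ 1) (hlog : 30 * Real.log n ≤ ξ * n * p ^ 2) :
    gnpProb n p {G | ¬ NoSmallExpandingConfig ξ p G} ≤ (n : ℝ)⁻¹ := by
  have hn' : (1 : ℝ) ≤ n := by exact_mod_cast hn
  set X := (Icc 1 n).filter fun x : ℕ => (x : ℝ) ≤ ξ * n / 2
  set I := X.sigma fun x =>
    powersetCard x (univ : Finset (Fin n)) ×ˢ powersetCard x (univ : Finset (Fin n × Fin n))
  have hcover := mul_gnpProb_le_sum (m := 1) (I := I)
    (B := fun i => {G | IsExpandingConfig G (ξ * n * p ^ 2) i.2.1 i.2.2}) hp0 hp1 (by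
      intro G (hG : ¬ NoSmallExpandingConfig ξ p G)
      simp only [NoSmallExpandingConfig, not_forall, not_not] at hG
      obtain ⟨x, hx1, hxξ, W, E, hW, hE, hG⟩ := hG
      have hxn : x ≤ n := hW ▸ (card_le_univ W).trans_eq (Fintype.card_fin n)
      refine Nat.one_le_cast.2 (one_le_card.2 ⟨⟨x, W, E⟩, ?_⟩)
      simp [I, X, hx1, hxn, hxξ, hW, hE, hG])
  rw [one_mul, sum_sigma] at hcover
  refine hcover.trans ?_
  calc ∑ x ∈ X, ∑ q ∈ powersetCard x univ ×ˢ powersetCard x univ,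
        gnpProb n p {G | IsExpandingConfig G (ξ * n * p ^ 2) q.1 q.2}
      ≤ ∑ x ∈ X, ∑ _q ∈ powersetCard x (univ : Finset (Fin n)) ×ˢ
          powersetCard x (univ : Finset (Fin n × Fin n)), ((n : ℝ) ^ (5 * x))⁻¹ := by
        gcongr with x hx q hq
        obtain ⟨hW, hE⟩ : #q.1 = x ∧ #q.2 = x := by simpa using hq
        have hxξ : (x : ℝ) ≤ ξ * n / 2 := (mem_filter.1 hx).2
        refine (gnpProb_isExpandingConfig_le hp0 hp1 (hE.trans hW.symm)).trans ?_
        rw [hW]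
        exact pow_mul_one_add_sq_pow_div_le hn hp0 hp1 (by nlinarith) hlog
    _ ≤ ∑ x ∈ X, ((n : ℝ) ^ 2)⁻¹ := by
        gcongr with x hx
        have hx1 : 1 ≤ x := (mem_Icc.1 (mem_filter.1 hx).1).1
        rw [sum_const, card_product, card_powersetCard, card_powersetCard, card_univ,
          card_univ, Fintype.card_prod, Fintype.card_fin, nsmul_eq_mul]
        calc ((n.choose x * (n * n).choose x : ℕ) : ℝ) * ((n : ℝ) ^ (5 * x))⁻¹
            ≤ (n : ℝ) ^ (3 * x) * ((n : ℝ) ^ (5 * x))⁻¹ := by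
              gcongr
              calc ((n.choose x * (n * n).choose x : ℕ) : ℝ)
                  ≤ ((n ^ x * (n * n) ^ x : ℕ) : ℝ) := by
                    gcongr <;> exact Nat.choose_le_pow _ _
                _ = (n : ℝ) ^ (3 * x) := by push_cast; ring
          _ = ((n : ℝ) ^ (2 * x))⁻¹ := by
              rw [show 5 * x = 3 * x + 2 * x by ring, pow_add, mul_inv,
                mul_inv_cancel_left₀ (by positivity)]
          _ ≤ ((n : ℝ) ^ 2)⁻¹ := by
              gcongr
              omega
    _ ≤ (n : ℝ)⁻¹ := by
        have hX : #X ≤ n := (card_filter_le _ _).trans (by simp)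
        rw [sum_const, nsmul_eq_mul, sq, mul_inv, ← mul_assoc]
        calc (#X : ℝ) * (n : ℝ)⁻¹ * (n : ℝ)⁻¹ ≤ n * (n : ℝ)⁻¹ * (n : ℝ)⁻¹ := by gcongr
          _ = (n : ℝ)⁻¹ := by rw [mul_inv_cancel₀ (by positivity), one_mul]

lemma noSmallExpandingConfig_of_half_lt_sq {n : ℕ} {ξ p : ℝ} (hp : 1 / 2 < p ^ 2)
    (G : SimpleGraph (Fin n)) : NoSmallExpandingConfig ξ p G := by
  rintro x hx1 hxξ ⟨W, E, hW, hE, hG⟩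
  have hcard := hG.le_card (hE.trans hW.symm) (card_pos.1 (hW ▸ hx1))
  rw [hW] at hcard
  have hx1' : (1 : ℝ) ≤ x := by exact_mod_cast hx1
  nlinarith

lemma gnpProb_noSmallExpandingConfig_mem_Icc {ξ p : ℝ} {n : ℕ} (hn : 1 ≤ n) (hp0 : 0 ≤ p)
    (hlog : 30 * Real.log n ≤ ξ * n * p ^ 2) :
    gnpProb n p {G | NoSmallExpandingConfig ξ p G} ∈ Set.Icc (1 - (n : ℝ)⁻¹) 1 := by
  by_cases hp1 : p ≤ 1
  · have hcompl := gnpProb_compl p {G : SimpleGraph (Fin n) | NoSmallExpandingConfig ξ p G}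
    rw [Set.compl_ofPred] at hcompl
    have := gnpProb_not_noSmallExpandingConfig_le hn hp0 hp1 hlog
    exact ⟨by linarith, gnpProb_le_one hp0 hp1 _⟩
  · have huniv : {G : SimpleGraph (Fin n) | NoSmallExpandingConfig ξ p G} = Set.univ :=
      Set.eq_univ_of_forall (noSmallExpandingConfig_of_half_lt_sq (by nlinarith))
    rw [huniv, gnpProb_univ]
    exact ⟨by simp, le_rfl⟩

lemma mul_log_le_of_sqrt_mul_sqrt_le {K ξ q : ℝ} {n : ℕ} (hK : 0 ≤ K) (hξ : 0 < ξ)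
    (hn : 1 ≤ n) (h : √(K / ξ) * √(Real.log n / n) ≤ q) :
    K * Real.log n ≤ ξ * n * q ^ 2 := by
  have hn' : (0 : ℝ) < n := by exact_mod_cast hn
  rw [← Real.sqrt_mul (by positivity), Real.sqrt_le_iff] at h
  calc K * Real.log n = ξ * n * (K / ξ * (Real.log n / n)) := by field_simp
    _ ≤ ξ * n * q ^ 2 := by gcongr; exact h.2

end RandomTriangle

theorem stmt_11_general (ξ : ℝ) (hξ0 : 0 < ξ) :
    ∃ C : ℝ, 0 < C ∧
      ∀ p : ℕ → ℝ, (∀ n : ℕ, C * Real.sqrt (Real.log n / n) ≤ p n) →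
        AAS p (fun n G =>
          ∀ x : ℕ, 1 ≤ x → (x : ℝ) ≤ ξ * n / 2 →
            ¬ ∃ (W : Finset (Fin n)) (E : Finset (Fin n × Fin n)),
              W.card = x ∧ E.card = x ∧
              (∀ e ∈ E, G.Adj e.1 e.2 ∧ e.1 ∉ W ∧ e.2 ∉ W) ∧
              (∀ e ∈ E, ∀ f ∈ E, e ≠ f →
                e.1 ≠ f.1 ∧ e.1 ≠ f.2 ∧ e.2 ≠ f.1 ∧ e.2 ≠ f.2) ∧
              ((∀ e ∈ E, ξ * n * (p n) ^ 2 ≤ (codegIn G e.1 e.2 W : ℝ)) ∨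
               (∀ w ∈ W, ξ * n * (p n) ^ 2 ≤
                  ((E.filter fun e => G.Adj w e.1 ∧ G.Adj w e.2).card : ℝ)))) := by
  refine ⟨√(30 / ξ), by positivity, fun p hp => ?_⟩
  have hbounds : ∀ n : ℕ, 1 ≤ n →
      gnpProb n (p n) {G | NoSmallExpandingConfig ξ (p n) G} ∈ Set.Icc (1 - (n : ℝ)⁻¹) 1 :=
    fun n hn => gnpProb_noSmallExpandingConfig_mem_Icc hn
      ((by positivity : (0 : ℝ) ≤ _).trans (hp n))
      (mul_log_le_of_sqrt_mul_sqrt_le (by norm_num) hξ0 hn (hp n))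
  have hlim : Filter.Tendsto (fun n : ℕ => 1 - (n : ℝ)⁻¹) Filter.atTop (nhds 1) := by
    simpa using (tendsto_const_nhds (x := (1 : ℝ))).sub
      (tendsto_inv_atTop_nhds_zero_nat (𝕜 := ℝ))
  -- `NoSmallExpandingConfig ξ (p n)` unfolds to the property in the statement
  exact tendsto_of_tendsto_of_tendsto_of_le_of_le' hlim tendsto_const_nhds
    (Filter.eventually_atTop.2 ⟨1, fun n hn => (hbounds n hn).1⟩)
    (Filter.eventually_atTop.2 ⟨1, fun n hn => (hbounds n hn).2⟩)

/-- **Proposition (no small expanding configurations).** For every `ξ ∈ (0,1)` there is `C`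
such that if `p ≥ C√(log n / n)`, then a.a.s. `G(n,p)` contains no set `W` of `x` vertices
and set `E` of `x` independent edges avoiding `W` (for any `1 ≤ x ≤ ξn/2`) such that either
the endpoints of each edge of `E` have at least `ξnp²` common neighbours in `W`, or every
vertex of `W` is adjacent to both endpoints of at least `ξnp²` edges of `E`. -/
theorem stmt_11 (ξ : ℝ) (hξ0 : 0 < ξ) (hξ1 : ξ < 1) :
    ∃ C : ℝ, 0 < C ∧
      ∀ p : ℕ → ℝ, (∀ n : ℕ, C * Real.sqrt (Real.log n / n) ≤ p n) →
        AAS p (fun n G =>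
          ∀ x : ℕ, 1 ≤ x → (x : ℝ) ≤ ξ * n / 2 →
            ¬ ∃ (W : Finset (Fin n)) (E : Finset (Fin n × Fin n)),
              W.card = x ∧ E.card = x ∧
              (∀ e ∈ E, G.Adj e.1 e.2 ∧ e.1 ∉ W ∧ e.2 ∉ W) ∧
              (∀ e ∈ E, ∀ f ∈ E, e ≠ f →
                e.1 ≠ f.1 ∧ e.1 ≠ f.2 ∧ e.2 ≠ f.1 ∧ e.2 ≠ f.2) ∧
              ((∀ e ∈ E, ξ * n * (p n) ^ 2 ≤ (codegIn G e.1 e.2 W : ℝ)) ∨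
               (∀ w ∈ W, ξ * n * (p n) ^ 2 ≤
                  ((E.filter fun e => G.Adj w e.1 ∧ G.Adj w e.2).card : ℝ)))) :=
  stmt_11_general ξ hξ0
end
end
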